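/- Let A ∈ ℝ^{m×n}, y ∈ ℝ^m, ρ ≥ 0, and let R : ℝ^n → ℝ ∪ {+∞} be proper and lower semicontinuous. Assume: (i) there exists x ∈ dom(R) with ‖y − |Ax|²‖₂ ≤ ρ; (ii) R is non-negative; (iii) Ker(R_∞) ∩ Ker(A) = {0}, where R_∞ is the asymptotic function of R. Then the set of minimizers of R over {x ∈ ℝ^n : ‖y − |Ax|²‖₂ ≤ ρ} is non-empty and compact. -/

import Mathlib

open MeasureTheory ProbabilityTheory Filter
open scoped NNReal ENNReal BigOperators

noncomputable section

/-- The Euclidean (`ℓ²`) norm on `Fin n → ℝ`. -/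
def enorm2 {n : ℕ} (x : Fin n → ℝ) : ℝ := Real.sqrt (∑ i, x i ^ 2)

/-- Matrix-vector multiplication for `A ∈ ℝ^{m×n}`. -/
def mulVec' {m n : ℕ} (A : Fin m → Fin n → ℝ) (x : Fin n → ℝ) : Fin m → ℝ :=
  fun i => ∑ j, A i j * x j

/-- The asymptotic (recession) function `R_∞(z) = liminf_{z'→z, t→∞} R(t z')/t`. -/
def asympFun {n : ℕ} (R : (Fin n → ℝ) → EReal) (z : Fin n → ℝ) : EReal :=
  Filter.liminf (fun p : (Fin n → ℝ) × ℝ => R (p.2 • p.1) * ((p.2⁻¹ : ℝ) : EReal))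
    ((nhds z) ×ˢ Filter.atTop)

/-- The noiseless feasible set `{x : |Ax| = √ȳ entrywise}`. -/
def feasSet {m n : ℕ} (A : Fin m → Fin n → ℝ) (ybar : Fin m → ℝ) : Set (Fin n → ℝ) :=
  {x | ∀ r, |mulVec' A x r| = Real.sqrt (ybar r)}

/-- Set of minimizers of `R` over `S`. -/
def argminOn {α β : Type*} [Preorder β] (R : α → β) (S : Set α) : Set α :=
  {x ∈ S | ∀ z ∈ S, R x ≤ R z}

/-- Convexity for `EReal`-valued functions. -/
def ERealConvex {n : ℕ} (R : (Fin n → ℝ) → EReal) : Prop :=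
  ∀ x y : Fin n → ℝ, ∀ a b : ℝ, 0 ≤ a → 0 ≤ b → a + b = 1 →
    R (a • x + b • y) ≤ (a : EReal) * R x + (b : EReal) * R y

/-- Descent cone of `R` at `x̄`. -/
def descentCone {n : ℕ} {β : Type*} [Preorder β] (R : (Fin n → ℝ) → β)
    (xbar : Fin n → ℝ) : Set (Fin n → ℝ) :=
  {z | ∃ t : ℝ, 0 < t ∧ R (xbar + t • z) ≤ R xbar}

/-- Euclidean unit sphere of `ℝⁿ`. -/
def unitSphere (n : ℕ) : Set (Fin n → ℝ) := {x | enorm2 x = 1}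

/-- The constant ν = (1/18)√(π/2). -/
def nu : ℝ := (1 / 18) * Real.sqrt (Real.pi / 2)

/-- Law of a random `m × n` matrix with i.i.d. `N(0, 1/m)` entries. -/
def gaussMatrix (m n : ℕ) : Measure (Fin m → Fin n → ℝ) :=
  Measure.pi fun _ => Measure.pi fun _ => gaussianReal 0 (m : ℝ≥0)⁻¹

/-- Standard Gaussian vector `N(0, Id_n)`. -/
def gaussVec (n : ℕ) : Measure (Fin n → ℝ) := Measure.pi fun _ => gaussianReal 0 1

/-- Dot product. -/
def dot {n : ℕ} (x y : Fin n → ℝ) : ℝ := ∑ i, x i * y i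

/-- Gaussian width of S. -/
def gaussianWidth {n : ℕ} (S : Set (Fin n → ℝ)) : ℝ :=
  ∫ z, sSup ((fun x => dot z x) '' S) ∂(gaussVec n)

/-- `‖A^I x‖₂` : ℓ² norm of the rows of `Ax` indexed by `I`. -/
def rowNorm {m n : ℕ} (A : Fin m → Fin n → ℝ) (I : Finset (Fin m)) (x : Fin n → ℝ) : ℝ :=
  Real.sqrt (∑ i ∈ I, (mulVec' A x i) ^ 2)

/-- Covering number `N(S, δ)` by Euclidean balls of radius `δ` centered in `S`. -/
def coveringNumber {n : ℕ} (S : Set (Fin n → ℝ)) (δ : ℝ) : ℕ :=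
  sInf {k : ℕ | ∃ T : Finset (Fin n → ℝ), T.card = k ∧ ↑T ⊆ S ∧
    S ⊆ ⋃ c ∈ T, {x | enorm2 (x - c) ≤ δ}}

/-- Constrained (Mozorov) feasible set `{x : ‖y − |Ax|²‖₂ ≤ ρ}`. -/
def feasConst {m n : ℕ} (A : Fin m → Fin n → ℝ) (y : Fin m → ℝ) (ρ : ℝ) :
    Set (Fin n → ℝ) :=
  {x | enorm2 (fun i => y i - (mulVec' A x i) ^ 2) ≤ ρ}

/-- Penalized (Tikhonov) objective `F_{y,λ}(x) = ‖y − |Ax|²‖₂² + λ R(x)`. -/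
def Fpen {m n : ℕ} (A : Fin m → Fin n → ℝ) (y : Fin m → ℝ) (lam : ℝ)
    (R : (Fin n → ℝ) → EReal) (x : Fin n → ℝ) : EReal :=
  ((enorm2 (fun i => y i - (mulVec' A x i) ^ 2) ^ 2 : ℝ) : EReal) + (lam : EReal) * R x


/-!
Fix a feasible `x₀` with `R x₀ < ⊤`. Minimizing `R` over the feasible set `S` is the same as
minimizing it over the closed set `K = S ∩ {R ≤ R x₀}`, so it suffices that `K` is bounded, i.e.
that its asymptotic cone is `{0}`. A direction `z` in that cone is a limit of `x / t` with
`x ∈ K`, `t → ∞`: then `R x / t ≤ R x₀ / t → 0` gives `R_∞ z = 0` (as `R ≥ 0`), and since `|Ax|`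
stays bounded on `S`, `A z = 0`. Hence `z = 0` by the kernel condition.
-/

open Topology Set Bornology AffineSpace

section Argmin

variable {α β : Type*} [LinearOrder β] {R : α → β} {S : Set α} {x₀ : α}

theorem argminOn_eq_inter_biInter : argminOn R S = S ∩ ⋂ z ∈ S, R ⁻¹' Iic (R z) := by
  ext x
  simp [argminOn]

theorem argminOn_subset_sublevel (hx₀ : x₀ ∈ S) : argminOn R S ⊆ S ∩ R ⁻¹' Iic (R x₀) :=
  fun _ hx => ⟨hx.1, hx.2 x₀ hx₀⟩

variable [TopologicalSpace α]

theorem isClosed_argminOn (hS : IsClosed S) (hR : LowerSemicontinuous R) :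
    IsClosed (argminOn R S) := by
  rw [argminOn_eq_inter_biInter]
  exact hS.inter (isClosed_biInter fun z _ => hR.isClosed_preimage (R z))

theorem argminOn_nonempty_of_isCompact_sublevel (hR : LowerSemicontinuous R) (hx₀ : x₀ ∈ S)
    (hK : IsCompact (S ∩ R ⁻¹' Iic (R x₀))) : (argminOn R S).Nonempty := by
  obtain ⟨x, hx, hmin⟩ :=
    LowerSemicontinuousOn.exists_isMinOn (s := S ∩ R ⁻¹' Iic (R x₀)) ⟨x₀, hx₀, le_rfl⟩ hK
      (hR.lowerSemicontinuousOn _)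
  refine ⟨x, hx.1, fun z hz => ?_⟩
  rcases le_total (R z) (R x₀) with h | h
  · exact hmin ⟨hz, h⟩
  · exact (hmin ⟨hx₀, le_rfl⟩).trans h

theorem isCompact_argminOn_of_isCompact_sublevel (hS : IsClosed S) (hR : LowerSemicontinuous R)
    (hx₀ : x₀ ∈ S) (hK : IsCompact (S ∩ R ⁻¹' Iic (R x₀))) : IsCompact (argminOn R S) :=
  hK.of_isClosed_subset (isClosed_argminOn hS hR) (argminOn_subset_sublevel hx₀)

end Argmin

section AsymptoticCone

theorem ContinuousLinearMap.image_asymptoticCone_subset {V W : Type*} [AddCommGroup V]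
    [Module ℝ V] [TopologicalSpace V] [IsTopologicalAddGroup V] [ContinuousSMul ℝ V]
    [AddCommGroup W] [Module ℝ W] [TopologicalSpace W] [IsTopologicalAddGroup W]
    [ContinuousSMul ℝ W] (L : V →L[ℝ] W) (s : Set V) :
    L '' asymptoticCone ℝ s ⊆ asymptoticCone ℝ (L '' s) := by
  rintro _ ⟨v, hv, rfl⟩
  have hL : Tendsto L (asymptoticNhds ℝ V v) (asymptoticNhds ℝ W (L v)) := by
    rw [asymptoticNhds_eq_smul, ← map₂_smul, ← map_prod_eq_map₂, tendsto_map'_iff]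
    simpa only [Function.comp_def, map_smul] using
      tendsto_fst.atTop_smul_nhds_tendsto_asymptoticNhds ((L.continuous.tendsto v).comp tendsto_snd)
  exact hL.frequently (hv.mono fun _ hx => mem_image_of_mem L hx)

theorem ContinuousLinearMap.map_eq_zero_of_mem_asymptoticCone {V W : Type*}
    [NormedAddCommGroup V] [NormedSpace ℝ V] [NormedAddCommGroup W] [NormedSpace ℝ W]
    (L : V →L[ℝ] W) {s : Set V} (hs : IsBounded (L '' s)) {v : V}
    (hv : v ∈ asymptoticCone ℝ s) : L v = 0 :=
  asymptoticCone_subset_singleton_of_bounded hs (L.image_asymptoticCone_subset s ⟨v, hv, rfl⟩)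

end AsymptoticCone

section AsymptoticFunction

variable {n : ℕ} {R : (Fin n → ℝ) → EReal}

theorem asympFun_nonneg (hR : ∀ x, 0 ≤ R x) (z : Fin n → ℝ) : 0 ≤ asympFun R z := by
  refine le_liminf_of_le (by isBoundedDefault) ?_
  filter_upwards [tendsto_snd.eventually (eventually_gt_atTop 0)] with p hp
  exact mul_nonneg (hR _) (EReal.coe_nonneg.2 (inv_nonneg.2 hp.le))

theorem asympFun_nonpos_of_mem_asymptoticCone {c : ℝ} {z : Fin n → ℝ}
    (hz : z ∈ asymptoticCone ℝ {x | R x ≤ c}) : asympFun R z ≤ 0 := by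
  rw [mem_asymptoticCone_iff, asymptoticNhds_eq_smul, ← map₂_smul, ← map_prod_eq_map₂,
    prod_comm, map_map, frequently_map] at hz
  have hlim : Tendsto (fun p : (Fin n → ℝ) × ℝ => ((c * p.2⁻¹ : ℝ) : EReal))
      (𝓝 z ×ˢ atTop) (𝓝 0) := by
    rw [← EReal.coe_zero, EReal.tendsto_coe]
    simpa using (tendsto_inv_atTop_zero.comp tendsto_snd).const_mul c
  refine le_of_forall_gt_imp_ge_of_dense fun ε hε => liminf_le_of_frequently_le' ?_
  refine hz.mp ?_
  filter_upwards [tendsto_snd.eventually (eventually_gt_atTop 0), hlim.eventually_lt_const hε]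
    with p hp hpε hle
  calc R (p.2 • p.1) * ((p.2⁻¹ : ℝ) : EReal) ≤ (c : EReal) * ((p.2⁻¹ : ℝ) : EReal) :=
        mul_le_mul_of_nonneg_right hle (EReal.coe_nonneg.2 (inv_nonneg.2 hp.le))
    _ ≤ ε := by rw [← EReal.coe_mul]; exact hpε.le

end AsymptoticFunction

section PhaseRetrieval

variable {m n : ℕ} (A : Fin m → Fin n → ℝ) (y : Fin m → ℝ) (ρ : ℝ)

theorem abs_le_enorm2 (v : Fin n → ℝ) (r : Fin n) : |v r| ≤ enorm2 v := by
  rw [← Real.sqrt_sq_eq_abs]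
  exact Real.sqrt_le_sqrt (Finset.single_le_sum (fun i _ => sq_nonneg (v i)) (Finset.mem_univ r))

theorem isClosed_feasConst : IsClosed (feasConst A y ρ) := by
  unfold feasConst enorm2 mulVec'
  exact isClosed_le (by fun_prop) continuous_const

theorem sq_mulVec'_le_of_mem_feasConst {x : Fin n → ℝ} (hx : x ∈ feasConst A y ρ) (r : Fin m) :
    mulVec' A x r ^ 2 ≤ ρ + ‖y‖ := by
  have hres := (abs_le_enorm2 (fun i => y i - mulVec' A x i ^ 2) r).trans hx
  have hy : |y r| ≤ ‖y‖ := by simpa only [Real.norm_eq_abs] using norm_le_pi_norm y r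
  linarith [abs_le.1 hres, abs_le.1 hy]

theorem isBounded_image_mulVec'_feasConst : IsBounded (mulVec' A '' feasConst A y ρ) := by
  refine isBounded_iff_forall_norm_le.2 ⟨√(ρ + ‖y‖), ?_⟩
  rintro _ ⟨x, hx, rfl⟩
  refine (pi_norm_le_iff_of_nonneg (Real.sqrt_nonneg _)).2 fun r => ?_
  exact Real.abs_le_sqrt (sq_mulVec'_le_of_mem_feasConst A y ρ hx r)

theorem mulVec'_eq_zero_of_mem_asymptoticCone_feasConst {z : Fin n → ℝ}
    (hz : z ∈ asymptoticCone ℝ (feasConst A y ρ)) : mulVec' A z = 0 :=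
  -- `mulVec' A` is definitionally `(Matrix.of A *ᵥ ·)`
  (Matrix.mulVecLin (Matrix.of A)).toContinuousLinearMap.map_eq_zero_of_mem_asymptoticCone
    (isBounded_image_mulVec'_feasConst A y ρ) hz

theorem isCompact_feasConst_inter_sublevel {R : (Fin n → ℝ) → EReal}
    (hRlsc : LowerSemicontinuous R)
    (hRnonneg : ∀ x, 0 ≤ R x)
    (hker : {z : Fin n → ℝ | asympFun R z = 0} ∩ {z | mulVec' A z = 0} = {0}) (c : ℝ) :
    IsCompact (feasConst A y ρ ∩ R ⁻¹' Iic (c : EReal)) := by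
  refine Metric.isCompact_of_isClosed_isBounded
    ((isClosed_feasConst A y ρ).inter (hRlsc.isClosed_preimage _)) ?_
  refine isBounded_iff_asymptoticCone_subset_singleton.2 fun z hz => ?_
  rw [← hker]
  exact ⟨le_antisymm
      (asympFun_nonpos_of_mem_asymptoticCone (asymptoticCone_mono inter_subset_right hz))
      (asympFun_nonneg hRnonneg z),
    mulVec'_eq_zero_of_mem_asymptoticCone_feasConst A y ρ
      (asymptoticCone_mono inter_subset_left hz)⟩

end PhaseRetrieval

theorem statement11_general {m n : ℕ} (A : Fin m → Fin n → ℝ) (y : Fin m → ℝ) (ρ : ℝ)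
    (R : (Fin n → ℝ) → EReal)
    (hRlsc : LowerSemicontinuous R)
    (hfeas : ∃ x, R x ≠ ⊤ ∧ x ∈ feasConst A y ρ)
    (hRnonneg : ∀ x, 0 ≤ R x)
    (hker : {z : Fin n → ℝ | asympFun R z = 0} ∩ {z | mulVec' A z = 0} = {0}) :
    (argminOn R (feasConst A y ρ)).Nonempty ∧ IsCompact (argminOn R (feasConst A y ρ)) := by
  obtain ⟨x₀, hx₀top, hx₀⟩ := hfeas
  have hK : IsCompact (feasConst A y ρ ∩ R ⁻¹' Iic (R x₀)) := by
    rw [← EReal.coe_toReal hx₀top (ne_bot_of_le_ne_bot EReal.zero_ne_bot (hRnonneg x₀))]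
    exact isCompact_feasConst_inter_sublevel A y ρ hRlsc hRnonneg hker _
  exact ⟨argminOn_nonempty_of_isCompact_sublevel hRlsc hx₀ hK,
    isCompact_argminOn_of_isCompact_sublevel (isClosed_feasConst A y ρ) hRlsc hx₀ hK⟩

/-- existence and compactness of the set of minimizers of the constrained
(Mozorov) phase retrieval problem. -/
theorem statement11 {m n : ℕ} (A : Fin m → Fin n → ℝ) (y : Fin m → ℝ) (ρ : ℝ)
    (hρ : 0 ≤ ρ)
    (R : (Fin n → ℝ) → EReal)
    (hRbot : ∀ x, R x ≠ ⊥)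
    (hRproper : ∃ x, R x ≠ ⊤)
    (hRlsc : LowerSemicontinuous R)
    (hfeas : ∃ x, R x ≠ ⊤ ∧ x ∈ feasConst A y ρ)
    (hRnonneg : ∀ x, 0 ≤ R x)
    (hker : {z : Fin n → ℝ | asympFun R z = 0} ∩ {z | mulVec' A z = 0} = {0}) :
    (argminOn R (feasConst A y ρ)).Nonempty ∧ IsCompact (argminOn R (feasConst A y ρ)) :=
  statement11_general A y ρ R hRlsc hfeas hRnonneg hker

end
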